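/- arXiv:2210.09769 — 5 statements merged into one kernel-verified Lean document; each statement's English description precedes it below -/
import Mathlib

section
/- Let A, B be invertible square matrices and b a vector, and suppose F = (A−B)A^{-1} satisfies ‖F‖₂ < 1. Then ‖A^{-1}b − B^{-1}b‖₂ / ‖A^{-1}b‖₂ ≤ (σ_max(A)/σ_min(A)) · ‖F‖₂/(1 − ‖F‖₂). -/
/-!
With `x = A⁻¹b`, `y = B⁻¹b` and `F = (A - B)A⁻¹`, one has `A(y - x) = Ay - By = F(Ay)`, so
`‖A(y - x)‖ ≤ ‖F‖ (‖b‖ + ‖A(y - x)‖)`, i.e. `‖A(y - x)‖ ≤ ‖F‖/(1 - ‖F‖) · ‖b‖`.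
Bounding `‖A(y - x)‖` below by `σ_min ‖y - x‖` and `‖b‖ = ‖Ax‖` above by `σ_max ‖x‖` gives the claim.
-/

theorem norm_le_div_one_sub_mul_of_norm_le_mul_norm_add {E : Type*} [SeminormedAddCommGroup E]
    {u d : E} {f : ℝ} (hf₀ : 0 ≤ f) (hf₁ : f < 1) (h : ‖d‖ ≤ f * ‖u + d‖) :
    ‖d‖ ≤ f / (1 - f) * ‖u‖ := by
  rw [div_mul_eq_mul_div, le_div_iff₀ (by linarith)]
  nlinarith [mul_le_mul_of_nonneg_left (norm_add_le u d) hf₀]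

section Perturbation

variable {𝕜 E : Type*} [NontriviallyNormedField 𝕜] [SeminormedAddCommGroup E] [NormedSpace 𝕜 E]
  {A B A' B' : E →L[𝕜] E}

theorem apply_inverse_sub_inverse_eq (hA'l : ∀ v, A' (A v) = v) (hA'r : ∀ v, A (A' v) = v)
    (hB'r : ∀ v, B (B' v) = v) (b : E) :
    A (B' b - A' b) = (A - B).comp A' (A (B' b)) := by
  simp only [map_sub, ContinuousLinearMap.comp_apply, sub_apply, hA'l, hA'r,
    hB'r]

theorem norm_apply_inverse_sub_inverse_le (hA'l : ∀ v, A' (A v) = v) (hA'r : ∀ v, A (A' v) = v)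
    (hB'r : ∀ v, B (B' v) = v) (hF : ‖(A - B).comp A'‖ < 1) (b : E) :
    ‖A (B' b - A' b)‖ ≤ ‖(A - B).comp A'‖ / (1 - ‖(A - B).comp A'‖) * ‖b‖ := by
  refine norm_le_div_one_sub_mul_of_norm_le_mul_norm_add (norm_nonneg _) hF ?_
  have hsum : b + A (B' b - A' b) = A (B' b) := by rw [map_sub, hA'r, add_sub_cancel]
  rw [hsum, apply_inverse_sub_inverse_eq hA'l hA'r hB'r]
  exact ContinuousLinearMap.le_opNorm _ _

end Perturbation

theorem stmt_4_general {n : ℕ}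
    (A B A' B' : EuclideanSpace ℝ (Fin n) →L[ℝ] EuclideanSpace ℝ (Fin n))
    (hA'l : ∀ v, A' (A v) = v) (hA'r : ∀ v, A (A' v) = v)
    (hB'r : ∀ v, B (B' v) = v)
    (σmin σmax : ℝ) (hσ : 0 < σmin)
    -- σmin and σmax are the smallest and largest singular values of A:
    (hmin : ∀ v, σmin * ‖v‖ ≤ ‖A v‖) (hmax : ∀ v, ‖A v‖ ≤ σmax * ‖v‖)
    (b : EuclideanSpace ℝ (Fin n)) (hb : A' b ≠ 0)
    (hF : ‖(A - B).comp A'‖ < 1) :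
    ‖A' b - B' b‖ / ‖A' b‖ ≤
      (σmax / σmin) * (‖(A - B).comp A'‖ / (1 - ‖(A - B).comp A'‖)) := by
  set r := ‖(A - B).comp A'‖ / (1 - ‖(A - B).comp A'‖)
  have hr : 0 ≤ r := div_nonneg (norm_nonneg _) (by linarith)
  have hb_le : ‖b‖ ≤ σmax * ‖A' b‖ := by simpa only [hA'r] using hmax (A' b)
  rw [div_le_iff₀ (norm_pos_iff.mpr hb), div_mul_eq_mul_div, div_mul_eq_mul_div,
    le_div_iff₀ hσ]
  calc ‖A' b - B' b‖ * σmin ≤ ‖A (B' b - A' b)‖ := by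
        rw [norm_sub_rev, mul_comm]; exact hmin _
    _ ≤ r * ‖b‖ := norm_apply_inverse_sub_inverse_le hA'l hA'r hB'r hF b
    _ ≤ r * (σmax * ‖A' b‖) := by gcongr
    _ = σmax * r * ‖A' b‖ := by ring

/-- Sensitivity of linear systems: if `F = (A - B)A⁻¹` has operator norm `< 1`, then
`‖A⁻¹b - B⁻¹b‖ / ‖A⁻¹b‖ ≤ (σ_max(A)/σ_min(A)) · ‖F‖/(1-‖F‖)`. -/
theorem stmt_4 {n : ℕ}
    (A B A' B' : EuclideanSpace ℝ (Fin n) →L[ℝ] EuclideanSpace ℝ (Fin n))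
    (hA'l : ∀ v, A' (A v) = v) (hA'r : ∀ v, A (A' v) = v)
    (hB'l : ∀ v, B' (B v) = v) (hB'r : ∀ v, B (B' v) = v)
    (σmin σmax : ℝ) (hσ : 0 < σmin)
    -- σmin and σmax are the smallest and largest singular values of A:
    (hmin : ∀ v, σmin * ‖v‖ ≤ ‖A v‖) (hmax : ∀ v, ‖A v‖ ≤ σmax * ‖v‖)
    (hmin' : ∃ v ≠ 0, ‖A v‖ = σmin * ‖v‖) (hmax' : ∃ v ≠ 0, ‖A v‖ = σmax * ‖v‖)
    (b : EuclideanSpace ℝ (Fin n)) (hb : A' b ≠ 0)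
    (hF : ‖(A - B).comp A'‖ < 1) :
    ‖A' b - B' b‖ / ‖A' b‖ ≤
      (σmax / σmin) * (‖(A - B).comp A'‖ / (1 - ‖(A - B).comp A'‖)) :=
  stmt_4_general A B A' B' hA'l hA'r hB'r σmin σmax hσ hmin hmax b hb hF
end

section
/- Let γ : ℝ → ℝ^n be a C¹ curve with ‖γ'(t)‖₂ = 1 for all t, and suppose the velocity field satisfies ‖γ'(t₁) − γ'(t₂)‖₂ ≤ M‖γ(t₁) − γ(t₂)‖₂ for all t₁, t₂. Then for every t₀ there exists t ∈ (0, 1/M] such that ‖γ(t₀ + t) − γ(t₀)‖₂ ≥ 1/(4M). -/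
/-!
If the trajectory stayed within `1/(4M)` of `γ t₀` on `[t₀, t₀ + 1/M]`, the Lipschitz bound would
keep the velocity within `1/4` of the unit vector `d t₀`, so the component of the velocity along
`d t₀` would stay at least `3/4`. Integrating, the displacement along `d t₀` after time `1/M` would
be at least `3/(4M)`, exceeding the radius `1/(4M)`.
-/

open Set
open scoped RealInnerProductSpace

variable {E : Type*} [NormedAddCommGroup E] [InnerProductSpace ℝ E]

theorem one_sub_le_inner_of_norm_sub_le {u v : E} {ε : ℝ} (hu : ‖u‖ = 1) (hv : ‖v - u‖ ≤ ε) :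
    1 - ε ≤ ⟪u, v⟫ := by
  have hcross : -ε ≤ ⟪u, v - u⟫ := by
    have := neg_abs_le ⟪u, v - u⟫
    have := abs_real_inner_le_norm u (v - u)
    rw [hu, one_mul] at this
    linarith
  have hself : ⟪u, u⟫ = 1 := by rw [real_inner_self_eq_norm_sq, hu, one_pow]
  rw [inner_sub_right, hself] at hcross
  linarith

theorem mul_sub_le_inner_sub_of_le_inner_deriv {γ d : ℝ → E} {u : E} {c a b : ℝ} (hab : a ≤ b)
    (hγ : ∀ t ∈ Icc a b, HasDerivAt γ (d t) t) (hc : ∀ t ∈ Icc a b, c ≤ ⟪u, d t⟫) :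
    c * (b - a) ≤ ⟪u, γ b - γ a⟫ := by
  have hderiv : ∀ t ∈ Icc a b, HasDerivAt (fun s ↦ ⟪u, γ s⟫) ⟪u, d t⟫ t := fun t ht ↦
    (innerSL ℝ u).hasFDerivAt.comp_hasDerivAt t (hγ t ht)
  rw [inner_sub_right]
  refine (convex_Icc a b).mul_sub_le_image_sub_of_le_deriv
    (fun t ht ↦ (hderiv t ht).continuousAt.continuousWithinAt)
    (fun t ht ↦ (hderiv t (interior_subset ht)).differentiableAt.differentiableWithinAt)
    (fun t ht ↦ (hderiv t (interior_subset ht)).deriv ▸ hc t (interior_subset ht))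
    a (left_mem_Icc.2 hab) b (right_mem_Icc.2 hab) hab

/-- A unit-speed trajectory whose velocity field is `M`-Lipschitz along the curve
escapes the ball of radius `1/(4M)` within time `1/M`. -/
theorem stmt_5 {n : ℕ} (M : ℝ) (hM : 0 < M)
    (γ d : ℝ → EuclideanSpace ℝ (Fin n))
    (hderiv : ∀ t, HasDerivAt γ (d t) t)
    (hunit : ∀ t, ‖d t‖ = 1)
    (hlip : ∀ t₁ t₂, ‖d t₁ - d t₂‖ ≤ M * ‖γ t₁ - γ t₂‖)
    (t₀ : ℝ) :
    ∃ t ∈ Set.Ioc (0:ℝ) (1 / M), 1 / (4 * M) ≤ ‖γ (t₀ + t) - γ t₀‖ := by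
  by_contra! hescape
  set t₁ := t₀ + 1 / M
  have htrapped : ∀ t ∈ Icc t₀ t₁, ‖γ t - γ t₀‖ ≤ 1 / (4 * M) := by
    intro t ⟨ht₀, ht₁⟩
    rcases ht₀.eq_or_lt with rfl | ht₀
    · simp only [sub_self, norm_zero]; positivity
    · simpa using (hescape (t - t₀) ⟨by linarith, by linarith⟩).le
  have haligned : ∀ t ∈ Icc t₀ t₁, 1 - 1 / 4 ≤ ⟪d t₀, d t⟫ := fun t ht ↦
    one_sub_le_inner_of_norm_sub_le (hunit t₀) <| calc
      ‖d t - d t₀‖ ≤ M * ‖γ t - γ t₀‖ := hlip t t₀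
      _ ≤ M * (1 / (4 * M)) := by gcongr; exact htrapped t ht
      _ = 1 / 4 := by field_simp
  have hdisplacement := mul_sub_le_inner_sub_of_le_inner_deriv (by simp [t₁]; positivity)
    (fun t _ ↦ hderiv t) haligned
  have hinner_le := real_inner_le_norm (d t₀) (γ t₁ - γ t₀)
  rw [hunit, one_mul] at hinner_le
  have htrapped₁ := htrapped t₁ ⟨by simp [t₁]; positivity, le_rfl⟩
  have hgain : (1 - 1 / 4) * (t₁ - t₀) = 3 / (4 * M) := by simp only [t₁]; field_simp; ring
  exact absurd (by linarith : 3 / (4 * M) ≤ 1 / (4 * M)) (not_le.2 (by gcongr; norm_num))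
end

section
/- Let D : ℝ^n → ℝ^n be an M-Lipschitz unit-vector field and γ its flow. If on the interval [0, 1/M] one has ‖γ(t₁) − γ(t₂)‖₂ ≤ 1/(2M) for all t₁,t₂ ∈ [0,1/M], then ‖γ(1/M) − γ(0)‖₂ ≥ 1/(√2 · M). -/
/-!
Project the flow onto the initial direction `v = D(γ 0)`. On `[0, 1/M]` the trajectory stays
within `1/(2M)` of `γ 0`, so by the Lipschitz bound `‖D(γ t) - v‖ ≤ 1/2`; for unit vectors this
forces `⟪v, D(γ t)⟫ ≥ 1 - (1/2)²/2 = 7/8`. Hence `t ↦ ⟪v, γ t⟫` grows at rate at least `7/8`,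
and `‖γ(1/M) - γ 0‖ ≥ ⟪v, γ(1/M) - γ 0⟫ ≥ 7/(8M) ≥ 1/(√2 M)`.
-/

open Set
open scoped RealInnerProductSpace

section InnerProduct

variable {E : Type*} [NormedAddCommGroup E] [InnerProductSpace ℝ E]

theorem one_sub_sq_div_two_le_real_inner {u v : E} {ε : ℝ} (hu : ‖u‖ = 1) (hv : ‖v‖ = 1)
    (huv : ‖u - v‖ ≤ ε) : 1 - ε ^ 2 / 2 ≤ ⟪u, v⟫ := by
  have hsq : ‖u - v‖ ^ 2 ≤ ε ^ 2 := pow_le_pow_left₀ (norm_nonneg _) huv 2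
  rw [norm_sub_sq_real, hu, hv] at hsq
  linarith

theorem mul_sub_le_norm_sub_of_le_real_inner_deriv {γ γ' : ℝ → E} {v : E} {a b c : ℝ}
    (hab : a ≤ b) (hγ : ∀ t ∈ Icc a b, HasDerivAt γ (γ' t) t) (hv : ‖v‖ ≤ 1)
    (hc : ∀ t ∈ Icc a b, c ≤ ⟪v, γ' t⟫) :
    c * (b - a) ≤ ‖γ b - γ a‖ := by
  have hproj : ∀ t ∈ Icc a b, HasDerivAt (fun s ↦ ⟪v, γ s⟫) ⟪v, γ' t⟫ t := fun t ht ↦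
    (innerSL ℝ v).hasFDerivAt.comp_hasDerivAt t (hγ t ht)
  have hgrowth : c * (b - a) ≤ ⟪v, γ b⟫ - ⟪v, γ a⟫ := by
    refine (convex_Icc a b).mul_sub_le_image_sub_of_le_deriv
      (fun t ht ↦ (hproj t ht).continuousAt.continuousWithinAt)
      (fun t ht ↦ (hproj t (interior_subset ht)).differentiableAt.differentiableWithinAt)
      (fun t ht ↦ ?_) a (left_mem_Icc.2 hab) b (right_mem_Icc.2 hab) hab
    rw [(hproj t (interior_subset ht)).deriv]
    exact hc t (interior_subset ht)
  calc c * (b - a) ≤ ⟪v, γ b - γ a⟫ := by rwa [inner_sub_right]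
    _ ≤ ‖v‖ * ‖γ b - γ a‖ := real_inner_le_norm _ _
    _ ≤ ‖γ b - γ a‖ := mul_le_of_le_one_left (norm_nonneg _) hv

end InnerProduct

theorem one_div_sqrt_two_mul_le {M : ℝ} (hM : 0 < M) : 1 / (√2 * M) ≤ 7 / 8 * (1 / M) := by
  have hsqrt : 8 / 7 ≤ √2 := Real.le_sqrt_of_sq_le (by norm_num)
  rw [mul_one_div, div_le_div_iff₀ (by positivity) hM]
  nlinarith

/-- If the flow of an `M`-Lipschitz unit vector field stays within `1/(2M)` of itself
on `[0, 1/M]`, then `‖γ(1/M) - γ(0)‖ ≥ 1/(√2·M)`. -/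
theorem stmt_6 {n : ℕ} (M : ℝ) (hM : 0 < M)
    (D : EuclideanSpace ℝ (Fin n) → EuclideanSpace ℝ (Fin n))
    (hunit : ∀ x, ‖D x‖ = 1)
    (hlip : ∀ x y, ‖D x - D y‖ ≤ M * ‖x - y‖)
    (γ : ℝ → EuclideanSpace ℝ (Fin n))
    (hflow : ∀ t, HasDerivAt γ (D (γ t)) t)
    (hball : ∀ t₁ ∈ Set.Icc (0:ℝ) (1 / M), ∀ t₂ ∈ Set.Icc (0:ℝ) (1 / M),
      ‖γ t₁ - γ t₂‖ ≤ 1 / (2 * M)) :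
    1 / (Real.sqrt 2 * M) ≤ ‖γ (1 / M) - γ 0‖ := by
  have h0 : (0 : ℝ) ∈ Icc 0 (1 / M) := left_mem_Icc.2 (by positivity)
  have hclose : ∀ t ∈ Icc 0 (1 / M), ‖D (γ 0) - D (γ t)‖ ≤ 1 / 2 := fun t ht ↦
    calc ‖D (γ 0) - D (γ t)‖ ≤ M * ‖γ 0 - γ t‖ := hlip _ _
      _ ≤ M * (1 / (2 * M)) := by gcongr; exact hball 0 h0 t ht
      _ = 1 / 2 := by field_simp
  have haligned : ∀ t ∈ Icc 0 (1 / M), 7 / 8 ≤ ⟪D (γ 0), D (γ t)⟫ := fun t ht ↦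
    (le_of_eq (by norm_num)).trans
      (one_sub_sq_div_two_le_real_inner (hunit _) (hunit _) (hclose t ht))
  calc 1 / (Real.sqrt 2 * M) ≤ 7 / 8 * (1 / M - 0) := by
        rw [sub_zero]; exact one_div_sqrt_two_mul_le hM
    _ ≤ ‖γ (1 / M) - γ 0‖ :=
        mul_sub_le_norm_sub_of_le_real_inner_deriv h0.2 (fun t _ ↦ hflow t) (hunit _).le haligned
end

section
/- Let γ : ℝ → ℝ^n be the flow of an M-Lipschitz unit vector field D, let 0 < δ ≤ 1/4, and let p ∈ ℝ^n with ‖γ(t₀) − p‖₂ ≤ δ/(2M). Then there exists t* ∈ [−1/M, 1/M] such that ‖γ(t₀ + t*) − γ(t₀)‖₂ ≤ δ/M and D(γ(t₀ + t*))ᵀ(γ(t₀ + t*) − p) = 0. -/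
/-!
Along the flow, `γ (t₀ + t) = γ t₀ + t • D (γ (t₀ + t)) + O(M t²)`, because `D` varies by at
most `M |t|` along a unit-speed arc of length `|t|`. Hence
`g t = ⟪D (γ (t₀ + t)), γ (t₀ + t) - p⟫` stays within `M t² + δ / (2M)` of `t`; at `t = ± δ / M`
this error is at most `δ / M` because `δ ≤ 1 / 2`, so `g` changes sign on `[-δ/M, δ/M]` and
vanishes somewhere there.
-/

open scoped RealInnerProductSpace

open Set

theorem norm_sub_le_abs_sub_of_norm_deriv_le_one {E : Type*} [NormedAddCommGroup E]
    [NormedSpace ℝ E] {γ γ' : ℝ → E} (hγ : ∀ t, HasDerivAt γ (γ' t) t)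
    (hspeed : ∀ t, ‖γ' t‖ ≤ 1) (a b : ℝ) : ‖γ b - γ a‖ ≤ |b - a| := by
  simpa [Real.norm_eq_abs] using convex_univ.norm_image_sub_le_of_norm_hasDerivWithin_le
    (fun t _ => (hγ t).hasDerivWithinAt) (fun t _ => hspeed t) (mem_univ a) (mem_univ b)

theorem exists_mem_Icc_eq_zero_of_abs_sub_le {g : ℝ → ℝ} {a : ℝ}
    (hg : ContinuousOn g (Icc (-a) a)) (hleft : |g (-a) - -a| ≤ a) (hright : |g a - a| ≤ a) :
    ∃ t ∈ Icc (-a) a, g t = 0 := by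
  have hleft' := (abs_le.mp hleft).2
  have hright' := (abs_le.mp hright).1
  exact intermediate_value_Icc (by linarith [abs_nonneg (g a - a)]) hg ⟨by linarith, by linarith⟩

section Flow

variable {E : Type*} [NormedAddCommGroup E] [InnerProductSpace ℝ E] {M : ℝ} {D : E → E}
  {γ : ℝ → E}

theorem norm_flow_sub_sub_smul_le (hM : 0 ≤ M) (hspeed : ∀ x, ‖D x‖ ≤ 1)
    (hlip : ∀ x y, ‖D x - D y‖ ≤ M * ‖x - y‖) (hflow : ∀ t, HasDerivAt γ (D (γ t)) t)
    (t₀ t : ℝ) : ‖γ (t₀ + t) - γ t₀ - t • D (γ (t₀ + t))‖ ≤ M * t ^ 2 := by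
  set v := D (γ (t₀ + t))
  have hderiv (s : ℝ) : HasDerivAt (fun s => γ s - (s - t₀) • v) (D (γ s) - v) s := by
    have hlin : HasDerivAt (fun s : ℝ => (s - t₀) • v) v s := by
      simpa using ((hasDerivAt_id s).sub_const t₀).smul_const v
    exact (hflow s).sub hlin
  have hbound : ∀ s ∈ uIcc t₀ (t₀ + t), ‖D (γ s) - v‖ ≤ M * |t| := by
    intro s hs
    have hγ := norm_sub_le_abs_sub_of_norm_deriv_le_one hflow (fun s => hspeed _) (t₀ + t) s
    have hs' : |s - (t₀ + t)| ≤ |t| := by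
      simpa [abs_sub_comm] using abs_sub_right_of_mem_uIcc hs
    calc ‖D (γ s) - v‖ ≤ M * ‖γ s - γ (t₀ + t)‖ := hlip _ _
      _ ≤ M * |t| := by gcongr; exact hγ.trans hs'
  have hmvt := (convex_uIcc t₀ (t₀ + t)).norm_image_sub_le_of_norm_hasDerivWithin_le
    (fun s _ => (hderiv s).hasDerivWithinAt) hbound left_mem_uIcc right_mem_uIcc
  calc ‖γ (t₀ + t) - γ t₀ - t • v‖
      = ‖(γ (t₀ + t) - (t₀ + t - t₀) • v) - (γ t₀ - (t₀ - t₀) • v)‖ := by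
        congr 1; simp only [add_sub_cancel_left, sub_self, zero_smul]; abel
    _ ≤ M * |t| * ‖t₀ + t - t₀‖ := hmvt
    _ = M * t ^ 2 := by rw [add_sub_cancel_left, Real.norm_eq_abs, mul_assoc, abs_mul_abs_self, sq]

theorem abs_inner_flow_sub_sub_le (hM : 0 ≤ M) (hunit : ∀ x, ‖D x‖ = 1)
    (hlip : ∀ x y, ‖D x - D y‖ ≤ M * ‖x - y‖) (hflow : ∀ t, HasDerivAt γ (D (γ t)) t)
    (t₀ t : ℝ) (p : E) :
    |⟪D (γ (t₀ + t)), γ (t₀ + t) - p⟫ - t| ≤ M * t ^ 2 + ‖γ t₀ - p‖ := by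
  set v := D (γ (t₀ + t))
  have hv : ⟪v, v⟫ = 1 := by rw [real_inner_self_eq_norm_sq, hunit, one_pow]
  have hsplit : ⟪v, γ (t₀ + t) - p⟫ - t = ⟪v, γ (t₀ + t) - γ t₀ - t • v⟫ + ⟪v, γ t₀ - p⟫ := by
    simp only [inner_sub_right, inner_smul_right, hv]
    ring
  have hinner (w : E) : |⟪v, w⟫| ≤ ‖w‖ := by
    simpa [v, hunit] using abs_real_inner_le_norm v w
  calc |⟪v, γ (t₀ + t) - p⟫ - t|
      ≤ |⟪v, γ (t₀ + t) - γ t₀ - t • v⟫| + |⟪v, γ t₀ - p⟫| := hsplit ▸ abs_add_le _ _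
    _ ≤ M * t ^ 2 + ‖γ t₀ - p‖ := add_le_add
        ((hinner _).trans (norm_flow_sub_sub_smul_le hM (fun x => (hunit x).le) hlip hflow t₀ t))
        (hinner _)

end Flow

theorem mul_div_sq_add_div_two_mul_le_div {M δ : ℝ} (hM : 0 < M) (hδ0 : 0 ≤ δ) (hδ : δ ≤ 1 / 2) :
    M * (δ / M) ^ 2 + δ / (2 * M) ≤ δ / M := by
  have hrw : M * (δ / M) ^ 2 + δ / (2 * M) = (δ ^ 2 + δ / 2) / M := by
    field_simp
  rw [hrw]
  exact div_le_div_of_nonneg_right (by nlinarith) hM.le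

theorem stmt_8_general {n : ℕ} (M : ℝ) (hM : 0 < M)
    (D : EuclideanSpace ℝ (Fin n) → EuclideanSpace ℝ (Fin n))
    (hunit : ∀ x, ‖D x‖ = 1)
    (hlip : ∀ x y, ‖D x - D y‖ ≤ M * ‖x - y‖)
    (γ : ℝ → EuclideanSpace ℝ (Fin n))
    (hflow : ∀ t, HasDerivAt γ (D (γ t)) t)
    (δ : ℝ) (hδ : δ ≤ 1 / 4)
    (t₀ : ℝ) (p : EuclideanSpace ℝ (Fin n))
    (hp : ‖γ t₀ - p‖ ≤ δ / (2 * M)) :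
    ∃ tstar ∈ Set.Icc (-(1 / M)) (1 / M),
      ‖γ (t₀ + tstar) - γ t₀‖ ≤ δ / M ∧
      ⟪D (γ (t₀ + tstar)), γ (t₀ + tstar) - p⟫ = 0 := by
  have hδ0 : 0 ≤ δ := by
    by_contra! hneg
    linarith [norm_nonneg (γ t₀ - p), div_neg_of_neg_of_pos hneg (by positivity : 0 < 2 * M)]
  set a := δ / M
  have hD : Continuous D :=
    (LipschitzWith.of_dist_le' (by simpa [dist_eq_norm] using hlip)).continuous
  have hγ : Continuous γ := continuous_iff_continuousAt.mpr fun t => (hflow t).continuousAt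
  have hg : Continuous fun t => ⟪D (γ (t₀ + t)), γ (t₀ + t) - p⟫ := by fun_prop
  have hend (t : ℝ) (ht : t ^ 2 = a ^ 2) : |⟪D (γ (t₀ + t)), γ (t₀ + t) - p⟫ - t| ≤ a := by
    calc _ ≤ M * t ^ 2 + ‖γ t₀ - p‖ := abs_inner_flow_sub_sub_le hM.le hunit hlip hflow t₀ t p
      _ ≤ M * a ^ 2 + δ / (2 * M) := by rw [ht]; gcongr
      _ ≤ a := mul_div_sq_add_div_two_mul_le_div hM hδ0 (by linarith)
  obtain ⟨t, ht, hzero⟩ :=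
    exists_mem_Icc_eq_zero_of_abs_sub_le hg.continuousOn (hend (-a) (neg_sq a)) (hend a rfl)
  have ha : a ≤ 1 / M := div_le_div_of_nonneg_right (by linarith) hM.le
  refine ⟨t, Icc_subset_Icc (neg_le_neg ha) ha ht, ?_, hzero⟩
  calc ‖γ (t₀ + t) - γ t₀‖ ≤ |t₀ + t - t₀| :=
        norm_sub_le_abs_sub_of_norm_deriv_le_one hflow (fun s => (hunit _).le) t₀ (t₀ + t)
    _ = |t| := by rw [add_sub_cancel_left]
    _ ≤ a := abs_le.mpr ht

/-- Near any point `p` close to the trajectory, there is a nearby time at which the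
displacement to `p` is orthogonal to the direction of motion. -/
theorem stmt_8 {n : ℕ} (M : ℝ) (hM : 0 < M)
    (D : EuclideanSpace ℝ (Fin n) → EuclideanSpace ℝ (Fin n))
    (hunit : ∀ x, ‖D x‖ = 1)
    (hlip : ∀ x y, ‖D x - D y‖ ≤ M * ‖x - y‖)
    (γ : ℝ → EuclideanSpace ℝ (Fin n))
    (hflow : ∀ t, HasDerivAt γ (D (γ t)) t)
    (δ : ℝ) (hδ0 : 0 < δ) (hδ : δ ≤ 1 / 4)
    (t₀ : ℝ) (p : EuclideanSpace ℝ (Fin n))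
    (hp : ‖γ t₀ - p‖ ≤ δ / (2 * M)) :
    ∃ tstar ∈ Set.Icc (-(1 / M)) (1 / M),
      ‖γ (t₀ + tstar) - γ t₀‖ ≤ δ / M ∧
      ⟪D (γ (t₀ + tstar)), γ (t₀ + tstar) - p⟫ = 0 :=
  stmt_8_general M hM D hunit hlip γ hflow δ hδ t₀ p hp
end

section
/- Let A(x), A(y) be invertible n×n matrices and b(x), b(y) vectors, where all singular values of A(x) are in [σ_min, σ_max], ‖A(x) − A(y)‖₂ ≤ C_A‖x−y‖₂, ‖b(x) − b(y)‖₂ ≤ C_b‖x−y‖₂, and ‖x−y‖₂ ≤ σ_min/(2C_A). Define the normalized solution map Φ(w) = (A^{-1}(w)b(w), 1)/√(1 + ‖A^{-1}(w)b(w)‖₂²). Then ‖Φ(x) − Φ(y)‖₂ ≤ M‖x−y‖₂ for some constant M depending only on σ_min, σ_max, C_A, C_b. -/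
/-!
With `u = A(x)⁻¹ b(x)` and `v = A(y)⁻¹ b(y)`, `Φ` is the radial projection of the points `(u, 1)`,
`(v, 1)` onto the unit sphere, and radial projection moves points by at most `2‖p - q‖ / ‖q‖`.
Here `‖p - q‖ = ‖u - v‖` and `‖q‖ = √(1 + ‖v‖²)`, while the lower singular value bound gives
`σmin ‖u - v‖ ≤ ‖b(x) - b(y)‖ + ‖A(x) - A(y)‖ ‖v‖`. The factor `‖v‖`, which is not bounded
a priori, is absorbed by `‖q‖`, leaving `M = 4 max(C_A, C_b) / σmin`.
-/

section Normalization

variable {E : Type*} [NormedAddCommGroup E]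

theorem norm_toLp_prod_one (u : E) :
    ‖(WithLp.equiv 2 (E × ℝ)).symm (u, 1)‖ = √(1 + ‖u‖ ^ 2) := by
  rw [WithLp.prod_norm_eq_of_L2, add_comm]
  simp

variable [NormedSpace ℝ E]

theorem norm_inv_norm_smul_sub_inv_norm_smul_le (x : E) {y : E} (hy : y ≠ 0) :
    ‖‖x‖⁻¹ • x - ‖y‖⁻¹ • y‖ ≤ 2 * ‖x - y‖ / ‖y‖ := by
  have hy' : 0 < ‖y‖ := norm_pos_iff.2 hy
  have hrescale : ‖(‖x‖⁻¹ - ‖y‖⁻¹) • x‖ ≤ ‖x - y‖ / ‖y‖ := by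
    rcases eq_or_ne x 0 with rfl | hx
    · simp only [smul_zero, norm_zero]; positivity
    · rw [norm_smul, Real.norm_eq_abs, inv_sub_inv (norm_ne_zero_iff.2 hx) hy'.ne', abs_div,
        abs_mul, abs_norm, abs_norm, div_mul_eq_mul_div, mul_comm ‖x‖ ‖y‖,
        mul_div_mul_right _ _ (norm_ne_zero_iff.2 hx), abs_sub_comm]
      gcongr
      exact abs_norm_sub_norm_le x y
  calc ‖‖x‖⁻¹ • x - ‖y‖⁻¹ • y‖ = ‖(‖x‖⁻¹ - ‖y‖⁻¹) • x + ‖y‖⁻¹ • (x - y)‖ := by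
        rw [sub_smul, smul_sub]; abel_nf
    _ ≤ ‖x - y‖ / ‖y‖ + ‖x - y‖ / ‖y‖ := by
        refine (norm_add_le _ _).trans (add_le_add hrescale ?_)
        rw [norm_smul, norm_inv, norm_norm, inv_mul_eq_div]
    _ = 2 * ‖x - y‖ / ‖y‖ := by ring

theorem norm_smul_toLp_prod_one_sub_le (u v : E) :
    ‖(1 / √(1 + ‖u‖ ^ 2)) • (WithLp.equiv 2 (E × ℝ)).symm (u, 1) -
        (1 / √(1 + ‖v‖ ^ 2)) • (WithLp.equiv 2 (E × ℝ)).symm (v, 1)‖ ≤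
      2 * ‖u - v‖ / √(1 + ‖v‖ ^ 2) := by
  have hv : (WithLp.equiv 2 (E × ℝ)).symm (v, 1) ≠ 0 := by
    rw [← norm_ne_zero_iff, norm_toLp_prod_one]; positivity
  have hsub : (WithLp.equiv 2 (E × ℝ)).symm (u, 1) - (WithLp.equiv 2 (E × ℝ)).symm (v, 1) =
      (WithLp.equiv 2 (E × ℝ)).symm (u - v, 0) := by
    simp [← WithLp.toLp_sub]
  calc _ = ‖‖(WithLp.equiv 2 (E × ℝ)).symm (u, 1)‖⁻¹ • (WithLp.equiv 2 (E × ℝ)).symm (u, 1) -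
          ‖(WithLp.equiv 2 (E × ℝ)).symm (v, 1)‖⁻¹ • (WithLp.equiv 2 (E × ℝ)).symm (v, 1)‖ := by
        rw [norm_toLp_prod_one, norm_toLp_prod_one, one_div, one_div]
    _ ≤ 2 * ‖(WithLp.equiv 2 (E × ℝ)).symm (u, 1) - (WithLp.equiv 2 (E × ℝ)).symm (v, 1)‖ /
          ‖(WithLp.equiv 2 (E × ℝ)).symm (v, 1)‖ :=
        norm_inv_norm_smul_sub_inv_norm_smul_le _ hv
    _ = 2 * ‖u - v‖ / √(1 + ‖v‖ ^ 2) := by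
        rw [hsub, norm_toLp_prod_one, WithLp.prod_norm_eq_of_L2]
        simp

end Normalization

theorem mul_norm_sub_le_of_apply_eq {E F : Type*} [NormedAddCommGroup E] [NormedSpace ℝ E]
    [NormedAddCommGroup F] [NormedSpace ℝ F] {A B : E →L[ℝ] F} {σ : ℝ}
    (hA : ∀ w, σ * ‖w‖ ≤ ‖A w‖) {u v : E} {b b' : F} (hu : A u = b) (hv : B v = b') :
    σ * ‖u - v‖ ≤ ‖b - b'‖ + ‖A - B‖ * ‖v‖ :=
  calc σ * ‖u - v‖ ≤ ‖A (u - v)‖ := hA _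
    _ = ‖(b - b') - (A - B) v‖ := by
        rw [map_sub, hu, ← hv, sub_apply]; abel_nf
    _ ≤ ‖b - b'‖ + ‖A - B‖ * ‖v‖ := (norm_sub_le _ _).trans (by gcongr; exact (A - B).le_opNorm v)

theorem one_add_le_two_mul_sqrt_one_add_sq (a : ℝ) : 1 + a ≤ 2 * √(1 + a ^ 2) := by
  have h1 : 1 ≤ √(1 + a ^ 2) := Real.one_le_sqrt.2 (le_add_of_nonneg_right (sq_nonneg a))
  have h2 : |a| ≤ √(1 + a ^ 2) := Real.abs_le_sqrt (le_add_of_nonneg_left zero_le_one)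
  linarith [le_abs_self a]

theorem stmt_9_general (σmin σmax CA Cb : ℝ)
    (hσ : 0 < σmin) (hCb : 0 < Cb) :
    ∃ M : ℝ, 0 < M ∧
      ∀ (n : ℕ)
        (Ax Ay Ax' Ay' : EuclideanSpace ℝ (Fin n) →L[ℝ] EuclideanSpace ℝ (Fin n))
        (bx by' : EuclideanSpace ℝ (Fin n)) (x y : EuclideanSpace ℝ (Fin n)),
        (∀ v, Ax' (Ax v) = v) → (∀ v, Ax (Ax' v) = v) →
        (∀ v, Ay' (Ay v) = v) → (∀ v, Ay (Ay' v) = v) →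
        -- all singular values of A(x) lie in [σmin, σmax]:
        (∀ v, σmin * ‖v‖ ≤ ‖Ax v‖) → (∀ v, ‖Ax v‖ ≤ σmax * ‖v‖) →
        ‖Ax - Ay‖ ≤ CA * ‖x - y‖ →
        ‖bx - by'‖ ≤ Cb * ‖x - y‖ →
        ‖x - y‖ ≤ σmin / (2 * CA) →
        ‖((1 / Real.sqrt (1 + ‖Ax' bx‖ ^ 2)) •
            (WithLp.equiv 2 (EuclideanSpace ℝ (Fin n) × ℝ)).symm (Ax' bx, 1) :
              WithLp 2 (EuclideanSpace ℝ (Fin n) × ℝ)) -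
          (1 / Real.sqrt (1 + ‖Ay' by'‖ ^ 2)) •
            (WithLp.equiv 2 (EuclideanSpace ℝ (Fin n) × ℝ)).symm (Ay' by', 1)‖
          ≤ M * ‖x - y‖ := by
  set C := max CA Cb
  refine ⟨4 * C / σmin, div_pos (mul_pos four_pos (lt_max_of_lt_right hCb)) hσ, ?_⟩
  intro n Ax Ay Ax' Ay' bx by' x y _ hAxAx' _ hAyAy' hlow _ hAlip hblip _
  set v := Ay' by'
  set β := √(1 + ‖v‖ ^ 2)
  have hβ : 0 < β := by positivity
  have hC : Cb + CA * ‖v‖ ≤ C * (1 + ‖v‖) := by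
    have := mul_le_mul_of_nonneg_right (le_max_left CA Cb) (norm_nonneg v)
    linarith [le_max_right CA Cb]
  have hsolution : σmin * ‖Ax' bx - v‖ ≤ 2 * C * β * ‖x - y‖ :=
    calc σmin * ‖Ax' bx - v‖ ≤ ‖bx - by'‖ + ‖Ax - Ay‖ * ‖v‖ :=
          mul_norm_sub_le_of_apply_eq hlow (hAxAx' bx) (hAyAy' by')
      _ ≤ Cb * ‖x - y‖ + CA * ‖x - y‖ * ‖v‖ := by gcongr
      _ = (Cb + CA * ‖v‖) * ‖x - y‖ := by ring
      _ ≤ C * (1 + ‖v‖) * ‖x - y‖ := by gcongr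
      _ ≤ C * (2 * β) * ‖x - y‖ := by
          gcongr
          exact one_add_le_two_mul_sqrt_one_add_sq _
      _ = 2 * C * β * ‖x - y‖ := by ring
  calc _ ≤ 2 * ‖Ax' bx - v‖ / β := norm_smul_toLp_prod_one_sub_le _ _
    _ ≤ 4 * C / σmin * ‖x - y‖ := by
        rw [div_le_iff₀ hβ, div_mul_eq_mul_div, div_mul_eq_mul_div, le_div_iff₀ hσ]
        linarith

/-- Lipschitzness of the normalized solution map
`Φ(w) = (A(w)⁻¹b(w), 1)/√(1+‖A(w)⁻¹b(w)‖²)`. -/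
theorem stmt_9 (σmin σmax CA Cb : ℝ)
    (hσ : 0 < σmin) (hσσ : σmin ≤ σmax) (hCA : 0 < CA) (hCb : 0 < Cb) :
    ∃ M : ℝ, 0 < M ∧
      ∀ (n : ℕ)
        (Ax Ay Ax' Ay' : EuclideanSpace ℝ (Fin n) →L[ℝ] EuclideanSpace ℝ (Fin n))
        (bx by' : EuclideanSpace ℝ (Fin n)) (x y : EuclideanSpace ℝ (Fin n)),
        (∀ v, Ax' (Ax v) = v) → (∀ v, Ax (Ax' v) = v) →
        (∀ v, Ay' (Ay v) = v) → (∀ v, Ay (Ay' v) = v) →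
        -- all singular values of A(x) lie in [σmin, σmax]:
        (∀ v, σmin * ‖v‖ ≤ ‖Ax v‖) → (∀ v, ‖Ax v‖ ≤ σmax * ‖v‖) →
        ‖Ax - Ay‖ ≤ CA * ‖x - y‖ →
        ‖bx - by'‖ ≤ Cb * ‖x - y‖ →
        ‖x - y‖ ≤ σmin / (2 * CA) →
        ‖((1 / Real.sqrt (1 + ‖Ax' bx‖ ^ 2)) •
            (WithLp.equiv 2 (EuclideanSpace ℝ (Fin n) × ℝ)).symm (Ax' bx, 1) :
              WithLp 2 (EuclideanSpace ℝ (Fin n) × ℝ)) -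
          (1 / Real.sqrt (1 + ‖Ay' by'‖ ^ 2)) •
            (WithLp.equiv 2 (EuclideanSpace ℝ (Fin n) × ℝ)).symm (Ay' by', 1)‖
          ≤ M * ‖x - y‖ :=
  stmt_9_general σmin σmax CA Cb hσ hCb
end
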